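/- If u(t,x,y) is a smooth solution of u_t - u_xx + x u_y = 0, then v = t² u_t + (tx + 3y) u_x + 3ty u_y + (2t + x²) u is also a solution of the same equation. -/

import Mathlib

open Real

noncomputable def pd (v : ℝ×ℝ×ℝ) (f : ℝ×ℝ×ℝ → ℝ) : ℝ×ℝ×ℝ → ℝ := fun p => fderiv ℝ f p v

lemma pd_smooth {f : ℝ×ℝ×ℝ → ℝ} (hf : ContDiff ℝ (⊤ : ℕ∞) f) (v : ℝ×ℝ×ℝ) :
    ContDiff ℝ (⊤ : ℕ∞) (pd v f) :=
  (hf.fderiv_right (by simp)).clm_apply contDiff_const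

lemma pd_comm {f : ℝ×ℝ×ℝ → ℝ} (hf : ContDiff ℝ (⊤ : ℕ∞) f) (v w : ℝ×ℝ×ℝ) :
    pd v (pd w f) = pd w (pd v f) := by
  funext p
  have h1 : DifferentiableAt ℝ (fderiv ℝ f) p :=
    ((hf.fderiv_right (m := (⊤ : ℕ∞)) (by simp)).differentiable (by simp)).differentiableAt
  have hsym : IsSymmSndFDerivAt ℝ f p := (hf.contDiffAt).isSymmSndFDerivAt (by rw [minSmoothness_of_isRCLikeNormedField]; exact WithTop.coe_le_coe.mpr le_top)
  have key : ∀ a z : ℝ×ℝ×ℝ, pd z (pd a f) p = fderiv ℝ (fderiv ℝ f) p z a := by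
    intro a z
    have hA := (h1.hasFDerivAt.clm_apply (hasFDerivAt_const a p)).fderiv
    show fderiv ℝ (fun q => fderiv ℝ f q a) p z = _
    rw [hA]
    simp [pd]
  rw [key w v, key v w]
  exact hsym.eq v w

lemma hd1 {g : ℝ×ℝ×ℝ → ℝ} (hg : ContDiff ℝ (⊤ : ℕ∞) g) (t x y : ℝ) :
    HasDerivAt (fun s => g (s, x, y)) (pd (1,0,0) g (t,x,y)) t := by
  have hc : HasDerivAt (fun s : ℝ => (s, x, y)) ((1:ℝ),(0:ℝ),(0:ℝ)) t :=
    (hasDerivAt_id t).prodMk ((hasDerivAt_const t x).prodMk (hasDerivAt_const t y))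
  exact ((hg.differentiable (by simp)).differentiableAt.hasFDerivAt.comp_hasDerivAt t hc)

lemma hd2 {g : ℝ×ℝ×ℝ → ℝ} (hg : ContDiff ℝ (⊤ : ℕ∞) g) (t x y : ℝ) :
    HasDerivAt (fun s => g (t, s, y)) (pd (0,1,0) g (t,x,y)) x := by
  have hc : HasDerivAt (fun s : ℝ => (t, s, y)) ((0:ℝ),(1:ℝ),(0:ℝ)) x :=
    (hasDerivAt_const x t).prodMk ((hasDerivAt_id x).prodMk (hasDerivAt_const x y))
  exact ((hg.differentiable (by simp)).differentiableAt.hasFDerivAt.comp_hasDerivAt x hc)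

lemma hd3 {g : ℝ×ℝ×ℝ → ℝ} (hg : ContDiff ℝ (⊤ : ℕ∞) g) (t x y : ℝ) :
    HasDerivAt (fun s => g (t, x, s)) (pd (0,0,1) g (t,x,y)) y := by
  have hc : HasDerivAt (fun s : ℝ => (t, x, s)) ((0:ℝ),(0:ℝ),(1:ℝ)) y :=
    (hasDerivAt_const y t).prodMk ((hasDerivAt_const y x).prodMk (hasDerivAt_id y))
  exact ((hg.differentiable (by simp)).differentiableAt.hasFDerivAt.comp_hasDerivAt y hc)

/-- Lie symmetry of the ultra-parabolic Kolmogorov equation u_t - u_xx + x u_y = 0. -/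
theorem stmt7 (u : ℝ → ℝ → ℝ → ℝ)
    (hu : ContDiff ℝ (⊤ : ℕ∞) (fun p : ℝ × ℝ × ℝ => u p.1 p.2.1 p.2.2))
    (hsol : ∀ t x y : ℝ,
      deriv (fun s => u s x y) t - deriv (fun s => deriv (fun r => u t r y) s) x
        + x * deriv (fun s => u t x s) y = 0) :
    let v : ℝ → ℝ → ℝ → ℝ := fun t x y =>
      t ^ 2 * deriv (fun s => u s x y) t + (t * x + 3 * y) * deriv (fun r => u t r y) x + 3 * t * y * deriv (fun s => u t x s) y + (2 * t + x ^ 2) * u t x y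
    ∀ t x y : ℝ,
      deriv (fun s => v s x y) t - deriv (fun s => deriv (fun r => v t r y) s) x
        + x * deriv (fun s => v t x s) y = 0 := by
  intro v t x y
  set F : ℝ×ℝ×ℝ → ℝ := fun p => u p.1 p.2.1 p.2.2 with hFdef
  have hF : ContDiff ℝ (⊤ : ℕ∞) F := hu
  -- rewrite v in pd form
  have hv : ∀ a b c : ℝ, v a b c =
      a^2 * pd (1,0,0) F (a,b,c) + (a*b+3*c) * pd (0,1,0) F (a,b,c)
        + 3*a*c * pd (0,0,1) F (a,b,c) + (2*a+b^2) * F (a,b,c) := by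
    intro a b c
    have d1 : deriv (fun s => u s b c) a = pd (1,0,0) F (a,b,c) := (hd1 hF a b c).deriv
    have d2 : deriv (fun r => u a r c) b = pd (0,1,0) F (a,b,c) := (hd2 hF a b c).deriv
    have d3 : deriv (fun s => u a b s) c = pd (0,0,1) F (a,b,c) := (hd3 hF a b c).deriv
    show a ^ 2 * deriv (fun s => u s b c) a + (a * b + 3 * c) * deriv (fun r => u a r c) b
        + 3 * a * c * deriv (fun s => u a b s) c + (2 * a + b ^ 2) * u a b c = _
    rw [d1, d2, d3]
  -- the PDE in pd form
  have hQ : ∀ a b c : ℝ,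
      pd (1,0,0) F (a,b,c) - pd (0,1,0) (pd (0,1,0) F) (a,b,c) + b * pd (0,0,1) F (a,b,c) = 0 := by
    intro a b c
    have d1 : deriv (fun s => u s b c) a = pd (1,0,0) F (a,b,c) := (hd1 hF a b c).deriv
    have hin : ∀ s, deriv (fun r => u a r c) s = pd (0,1,0) F (a,s,c) :=
      fun s => (hd2 hF a s c).deriv
    have d2 : deriv (fun s => deriv (fun r => u a r c) s) b
        = pd (0,1,0) (pd (0,1,0) F) (a,b,c) := by
      rw [funext hin]; exact (hd2 (pd_smooth hF _) a b c).deriv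
    have d3 : deriv (fun s => u a b s) c = pd (0,0,1) F (a,b,c) := (hd3 hF a b c).deriv
    rw [← d1, ← d2, ← d3]; exact hsol a b c
  -- derivative of v section in t
  have E1 : deriv (fun s => v s x y) t =
      2*t * pd (1,0,0) F (t,x,y) + t^2 * pd (1,0,0) (pd (1,0,0) F) (t,x,y)
      + x * pd (0,1,0) F (t,x,y) + (t*x+3*y) * pd (1,0,0) (pd (0,1,0) F) (t,x,y)
      + 3*y * pd (0,0,1) F (t,x,y) + 3*t*y * pd (1,0,0) (pd (0,0,1) F) (t,x,y)
      + 2 * F (t,x,y) + (2*t+x^2) * pd (1,0,0) F (t,x,y) := by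
    have hfe : (fun s => v s x y) = (fun s =>
        s^2 * pd (1,0,0) F (s,x,y) + (s*x+3*y) * pd (0,1,0) F (s,x,y)
          + 3*s*y * pd (0,0,1) F (s,x,y) + (2*s+x^2) * F (s,x,y)) :=
      funext fun s => hv s x y
    rw [hfe]
    have H := ((((hasDerivAt_pow 2 t).mul (hd1 (pd_smooth hF (1,0,0)) t x y)).add
        ((((hasDerivAt_id t).mul_const x).add_const (3*y)).mul (hd1 (pd_smooth hF (0,1,0)) t x y))).add
        ((((hasDerivAt_id t).const_mul (3:ℝ)).mul_const y).mul (hd1 (pd_smooth hF (0,0,1)) t x y))).add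
        ((((hasDerivAt_id t).const_mul (2:ℝ)).add_const (x^2)).mul (hd1 hF t x y))
    simp only [id_eq, Pi.mul_def, Pi.add_def] at H
    rw [H.deriv]
    push_cast
    ring
  -- inner x-derivative of v section
  have HxA : ∀ s : ℝ, HasDerivAt (fun r => v t r y)
      (t^2 * pd (0,1,0) (pd (1,0,0) F) (t,s,y) + t * pd (0,1,0) F (t,s,y)
      + (t*s+3*y) * pd (0,1,0) (pd (0,1,0) F) (t,s,y)
      + 3*t*y * pd (0,1,0) (pd (0,0,1) F) (t,s,y)
      + (2*s * F (t,s,y) + (2*t+s^2) * pd (0,1,0) F (t,s,y))) s := by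
    intro s
    have hfe : (fun r => v t r y) = (fun r =>
        t^2 * pd (1,0,0) F (t,r,y) + (t*r+3*y) * pd (0,1,0) F (t,r,y)
          + 3*t*y * pd (0,0,1) F (t,r,y) + (2*t+r^2) * F (t,r,y)) :=
      funext fun r => hv t r y
    rw [hfe]
    have H := ((((hasDerivAt_const s (t^2)).mul (hd2 (pd_smooth hF (1,0,0)) t s y)).add
        ((((hasDerivAt_id s).const_mul t).add_const (3*y)).mul (hd2 (pd_smooth hF (0,1,0)) t s y))).add
        ((hasDerivAt_const s (3*t*y)).mul (hd2 (pd_smooth hF (0,0,1)) t s y))).add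
        (((hasDerivAt_pow 2 s).const_add (2*t)).mul (hd2 hF t s y))
    simp only [id_eq, Pi.mul_def, Pi.add_def] at H
    refine H.congr_deriv ?_
    push_cast
    ring
  have E2 : deriv (fun s => deriv (fun r => v t r y) s) x =
      t^2 * pd (0,1,0) (pd (0,1,0) (pd (1,0,0) F)) (t,x,y)
      + 2*t * pd (0,1,0) (pd (0,1,0) F) (t,x,y)
      + (t*x+3*y) * pd (0,1,0) (pd (0,1,0) (pd (0,1,0) F)) (t,x,y)
      + 3*t*y * pd (0,1,0) (pd (0,1,0) (pd (0,0,1) F)) (t,x,y)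
      + 2 * F (t,x,y) + 4*x * pd (0,1,0) F (t,x,y)
      + (2*t+x^2) * pd (0,1,0) (pd (0,1,0) F) (t,x,y) := by
    have hfe : (fun s => deriv (fun r => v t r y) s) = (fun s =>
        t^2 * pd (0,1,0) (pd (1,0,0) F) (t,s,y) + t * pd (0,1,0) F (t,s,y)
        + (t*s+3*y) * pd (0,1,0) (pd (0,1,0) F) (t,s,y)
        + 3*t*y * pd (0,1,0) (pd (0,0,1) F) (t,s,y)
        + (2*s * F (t,s,y) + (2*t+s^2) * pd (0,1,0) F (t,s,y))) :=
      funext fun s => (HxA s).deriv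
    rw [hfe]
    have H := (((((hasDerivAt_const x (t^2)).mul
        (hd2 (pd_smooth (pd_smooth hF (1,0,0)) (0,1,0)) t x y)).add
        ((hasDerivAt_const x t).mul (hd2 (pd_smooth hF (0,1,0)) t x y))).add
        ((((hasDerivAt_id x).const_mul t).add_const (3*y)).mul
          (hd2 (pd_smooth (pd_smooth hF (0,1,0)) (0,1,0)) t x y))).add
        ((hasDerivAt_const x (3*t*y)).mul
          (hd2 (pd_smooth (pd_smooth hF (0,0,1)) (0,1,0)) t x y))).add
        ((((hasDerivAt_id x).const_mul (2:ℝ)).mul (hd2 hF t x y)).add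
        (((hasDerivAt_pow 2 x).const_add (2*t)).mul (hd2 (pd_smooth hF (0,1,0)) t x y)))
    simp only [id_eq, Pi.mul_def, Pi.add_def] at H
    rw [H.deriv]
    push_cast
    ring
  -- y-derivative of v section
  have E3 : deriv (fun s => v t x s) y =
      t^2 * pd (0,0,1) (pd (1,0,0) F) (t,x,y) + 3 * pd (0,1,0) F (t,x,y)
      + (t*x+3*y) * pd (0,0,1) (pd (0,1,0) F) (t,x,y)
      + 3*t * pd (0,0,1) F (t,x,y) + 3*t*y * pd (0,0,1) (pd (0,0,1) F) (t,x,y)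
      + (2*t+x^2) * pd (0,0,1) F (t,x,y) := by
    have hfe : (fun s => v t x s) = (fun s =>
        t^2 * pd (1,0,0) F (t,x,s) + (t*x+3*s) * pd (0,1,0) F (t,x,s)
          + 3*t*s * pd (0,0,1) F (t,x,s) + (2*t+x^2) * F (t,x,s)) :=
      funext fun s => hv t x s
    rw [hfe]
    have H := ((((hasDerivAt_const y (t^2)).mul (hd3 (pd_smooth hF (1,0,0)) t x y)).add
        ((((hasDerivAt_id y).const_mul (3:ℝ)).const_add (t*x)).mul
          (hd3 (pd_smooth hF (0,1,0)) t x y))).add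
        ((((hasDerivAt_id y).const_mul (3*t)).mul (hd3 (pd_smooth hF (0,0,1)) t x y)))).add
        ((hasDerivAt_const y (2*t+x^2)).mul (hd3 hF t x y))
    simp only [id_eq, Pi.mul_def, Pi.add_def] at H
    rw [H.deriv]
    ring
  -- derivatives of the PDE
  have hQ1 : pd (1,0,0) (pd (1,0,0) F) (t,x,y)
      - pd (1,0,0) (pd (0,1,0) (pd (0,1,0) F)) (t,x,y)
      + x * pd (1,0,0) (pd (0,0,1) F) (t,x,y) = 0 := by
    have H : HasDerivAt (fun s => pd (1,0,0) F (s,x,y)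
        - pd (0,1,0) (pd (0,1,0) F) (s,x,y) + x * pd (0,0,1) F (s,x,y))
        (pd (1,0,0) (pd (1,0,0) F) (t,x,y)
          - pd (1,0,0) (pd (0,1,0) (pd (0,1,0) F)) (t,x,y)
          + x * pd (1,0,0) (pd (0,0,1) F) (t,x,y)) t :=
      ((hd1 (pd_smooth hF _) t x y).sub (hd1 (pd_smooth (pd_smooth hF _) _) t x y)).add
        ((hd1 (pd_smooth hF _) t x y).const_mul x)
    have H0 : HasDerivAt (fun s => pd (1,0,0) F (s,x,y)
        - pd (0,1,0) (pd (0,1,0) F) (s,x,y) + x * pd (0,0,1) F (s,x,y)) 0 t := by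
      rw [show (fun s => pd (1,0,0) F (s,x,y) - pd (0,1,0) (pd (0,1,0) F) (s,x,y)
          + x * pd (0,0,1) F (s,x,y)) = fun _ => (0:ℝ) from funext fun s => hQ s x y]
      exact hasDerivAt_const t 0
    exact H.unique H0
  have hQ2 : pd (0,1,0) (pd (1,0,0) F) (t,x,y)
      - pd (0,1,0) (pd (0,1,0) (pd (0,1,0) F)) (t,x,y)
      + (pd (0,0,1) F (t,x,y) + x * pd (0,1,0) (pd (0,0,1) F) (t,x,y)) = 0 := by
    have H : HasDerivAt (fun r => pd (1,0,0) F (t,r,y)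
        - pd (0,1,0) (pd (0,1,0) F) (t,r,y) + r * pd (0,0,1) F (t,r,y))
        (pd (0,1,0) (pd (1,0,0) F) (t,x,y)
          - pd (0,1,0) (pd (0,1,0) (pd (0,1,0) F)) (t,x,y)
          + (pd (0,0,1) F (t,x,y) + x * pd (0,1,0) (pd (0,0,1) F) (t,x,y))) x := by
      have H' := ((hd2 (pd_smooth hF (1,0,0)) t x y).sub
          (hd2 (pd_smooth (pd_smooth hF (0,1,0)) (0,1,0)) t x y)).add
        ((hasDerivAt_id x).mul (hd2 (pd_smooth hF (0,0,1)) t x y))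
      simp only [id_eq, Pi.mul_def, Pi.add_def] at H'
      refine H'.congr_deriv ?_
      ring
    have H0 : HasDerivAt (fun r => pd (1,0,0) F (t,r,y)
        - pd (0,1,0) (pd (0,1,0) F) (t,r,y) + r * pd (0,0,1) F (t,r,y)) 0 x := by
      rw [show (fun r => pd (1,0,0) F (t,r,y) - pd (0,1,0) (pd (0,1,0) F) (t,r,y)
          + r * pd (0,0,1) F (t,r,y)) = fun _ => (0:ℝ) from funext fun r => hQ t r y]
      exact hasDerivAt_const x 0
    exact H.unique H0
  have hQ3 : pd (0,0,1) (pd (1,0,0) F) (t,x,y)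
      - pd (0,0,1) (pd (0,1,0) (pd (0,1,0) F)) (t,x,y)
      + x * pd (0,0,1) (pd (0,0,1) F) (t,x,y) = 0 := by
    have H : HasDerivAt (fun c => pd (1,0,0) F (t,x,c)
        - pd (0,1,0) (pd (0,1,0) F) (t,x,c) + x * pd (0,0,1) F (t,x,c))
        (pd (0,0,1) (pd (1,0,0) F) (t,x,y)
          - pd (0,0,1) (pd (0,1,0) (pd (0,1,0) F)) (t,x,y)
          + x * pd (0,0,1) (pd (0,0,1) F) (t,x,y)) y :=
      ((hd3 (pd_smooth hF _) t x y).sub (hd3 (pd_smooth (pd_smooth hF _) _) t x y)).add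
        ((hd3 (pd_smooth hF _) t x y).const_mul x)
    have H0 : HasDerivAt (fun c => pd (1,0,0) F (t,x,c)
        - pd (0,1,0) (pd (0,1,0) F) (t,x,c) + x * pd (0,0,1) F (t,x,c)) 0 y := by
      rw [show (fun c => pd (1,0,0) F (t,x,c) - pd (0,1,0) (pd (0,1,0) F) (t,x,c)
          + x * pd (0,0,1) F (t,x,c)) = fun _ => (0:ℝ) from funext fun c => hQ t x c]
      exact hasDerivAt_const y 0
    exact H.unique H0
  -- symmetry of mixed partials
  have s21 : pd (0,1,0) (pd (1,0,0) F) = pd (1,0,0) (pd (0,1,0) F) := pd_comm hF _ _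
  have s31 : pd (0,0,1) (pd (1,0,0) F) = pd (1,0,0) (pd (0,0,1) F) := pd_comm hF _ _
  have s32 : pd (0,0,1) (pd (0,1,0) F) = pd (0,1,0) (pd (0,0,1) F) := pd_comm hF _ _
  have s221 : pd (0,1,0) (pd (0,1,0) (pd (1,0,0) F))
      = pd (1,0,0) (pd (0,1,0) (pd (0,1,0) F)) := by
    rw [s21]; exact pd_comm (pd_smooth hF _) _ _
  have s223 : pd (0,0,1) (pd (0,1,0) (pd (0,1,0) F))
      = pd (0,1,0) (pd (0,1,0) (pd (0,0,1) F)) := by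
    rw [pd_comm (pd_smooth hF _) (0,0,1) (0,1,0), s32]
  rw [E1, E2, E3, s221, s31, s32]
  rw [s21] at hQ2
  rw [s31, s223] at hQ3
  linear_combination t^2 * hQ1 + (t*x+3*y) * hQ2 + 3*t*y * hQ3 + (4*t+x^2) * hQ t x y
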